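/- (Base case of Lemma 3, verified bounds.) Let n and f be integers with f ≥ 0 and n ≥ 5f + 1, and set N = ⌊(n+3f)/2⌋ + 1. Let W be a finite multiset of h real numbers with elements w_1 ≤ … ≤ w_h in nondecreasing order, and let R be a finite multiset of N real numbers containing a sub-multiset S with S a sub-multiset of W and |R| − |S| ≤ f. Let r_1 ≤ … ≤ r_N be the elements of R in nondecreasing order. Then h ≥ 2f + 1, the index N − 2f satisfies N − 2f ≥ 2f + 1, and: r_{f+1} ≥ w_1, r_{N−f} ≥ w_{N−2f} ≥ w_{2f+1}, and r_{N−f} ≤ w_h. Consequently the value v = (r_{f+1} + r_{N−f})/2 satisfies v ≥ (w_1 + w_{2f+1})/2. -/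

import Mathlib

/-!
The sorted list of a sub-multiset `S ≤ W` is a sublist of the sorted list of `W`, so it sits
inside it along a strictly monotone index map `φ` with `i ≤ φ i ≤ i + (|W| - |S|)`. Hence
`w_i ≤ s_i ≤ w_{i + |W| - |S|}`. Applying this to `S ≤ W` and to `S ≤ R`, where
`|R| - |S| ≤ f` and `N ≥ 4f + 1`, and chaining with monotonicity of the order statistics
gives every bound.
-/

/-- The `j`-th smallest element (1-indexed) of a finite multiset of reals. -/
noncomputable def mnth (W : Multiset ℝ) (j : ℕ) : ℝ :=
  (W.sort (· ≤ ·)).getD (j - 1) 0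

open Finset in
theorem Fin.le_orderEmbedding_apply {m n : ℕ} (f : Fin m ↪o Fin n) (i : Fin m) :
    (i : ℕ) ≤ f i := by
  simpa using card_le_card_of_injOn f (s := Iio i) (t := Iio (f i))
    (fun _ hj ↦ by simpa using hj) f.injective.injOn

open Finset in
theorem Fin.orderEmbedding_apply_le {m n : ℕ} (f : Fin m ↪o Fin n) (i : Fin m) :
    (f i : ℕ) ≤ i + (n - m) := by
  have := card_le_card_of_injOn f (s := Ioi i) (t := Ioi (f i))
    (fun _ hj ↦ by simpa using hj) f.injective.injOn
  simp only [Fin.card_Ioi] at this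
  omega

namespace List

variable {α : Type*} [Preorder α] {l₁ l₂ : List α}

theorem Sublist.getElem_le_getElem_of_sortedLE (h : l₁ <+ l₂) (hl₂ : l₂.SortedLE) {i : ℕ}
    (hi : i < l₁.length) : l₂[i]'(hi.trans_le h.length_le) ≤ l₁[i] := by
  obtain ⟨f, hf⟩ := sublist_iff_exists_fin_orderEmbedding_get_eq.mp h
  have hfi := hf ⟨i, hi⟩
  simp only [get_eq_getElem] at hfi
  rw [hfi]
  exact hl₂.getElem_le_getElem_of_le (Fin.le_orderEmbedding_apply f ⟨i, hi⟩)

theorem Sublist.getElem_le_getElem_add_of_sortedLE (h : l₁ <+ l₂) (hl₂ : l₂.SortedLE) {i : ℕ}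
    (hi : i < l₁.length) :
    l₁[i] ≤ l₂[i + (l₂.length - l₁.length)]'(by have := h.length_le; omega) := by
  obtain ⟨f, hf⟩ := sublist_iff_exists_fin_orderEmbedding_get_eq.mp h
  have hfi := hf ⟨i, hi⟩
  simp only [get_eq_getElem] at hfi
  rw [hfi]
  exact hl₂.getElem_le_getElem_of_le (Fin.orderEmbedding_apply_le f ⟨i, hi⟩)

end List

namespace Multiset

variable {α : Type*} [LinearOrder α]

theorem sortedLE_sort (s : Multiset α) : (s.sort (· ≤ ·)).SortedLE :=
  (pairwise_sort _ _).sortedLE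

theorem sort_sublist_sort {s t : Multiset α} (h : s ≤ t) :
    (s.sort (· ≤ ·)).Sublist (t.sort (· ≤ ·)) :=
  List.sublist_of_subperm_of_pairwise (by rwa [← coe_le, sort_eq, sort_eq])
    (pairwise_sort _ _) (pairwise_sort _ _)

end Multiset

section mnth

open Multiset

variable {S W : Multiset ℝ} {i j : ℕ}

theorem mnth_eq_getElem (hj : j - 1 < card W) :
    mnth W j = (W.sort (· ≤ ·))[j - 1]'(by rwa [length_sort]) :=
  List.getD_eq_getElem _ _ _

theorem mnth_le_mnth (hij : i ≤ j) (hj : j ≤ card W) : mnth W i ≤ mnth W j := by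
  obtain rfl | hj₀ := Nat.eq_zero_or_pos j
  · rw [Nat.le_zero.mp hij]
  rw [mnth_eq_getElem (by omega), mnth_eq_getElem (by omega)]
  exact (sortedLE_sort W).getElem_le_getElem_of_le (by omega)

theorem mnth_le_mnth_of_le (hSW : S ≤ W) (hi : 1 ≤ i) (hiS : i ≤ card S) :
    mnth W i ≤ mnth S i := by
  have hi' : i - 1 < (S.sort (· ≤ ·)).length := by rw [length_sort]; omega
  rw [mnth_eq_getElem (by have := card_le_card hSW; omega), mnth_eq_getElem (by omega)]
  exact (sort_sublist_sort hSW).getElem_le_getElem_of_sortedLE (sortedLE_sort W) hi'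

theorem mnth_le_mnth_add_card_sub_of_le (hSW : S ≤ W) (hi : 1 ≤ i) (hiS : i ≤ card S) :
    mnth S i ≤ mnth W (i + (card W - card S)) := by
  have hi' : i - 1 < (S.sort (· ≤ ·)).length := by rw [length_sort]; omega
  have hcard := card_le_card hSW
  rw [mnth_eq_getElem (by omega), mnth_eq_getElem (by omega)]
  have key := (sort_sublist_sort hSW).getElem_le_getElem_add_of_sortedLE (sortedLE_sort W) hi'
  simp only [length_sort] at key
  refine key.trans_eq ?_
  congr 1
  omega

end mnth

/-- base case of Lemma 3, verified bounds. -/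
theorem stmt_7 (n f : ℕ) (hn : 5 * f + 1 ≤ n) (N : ℕ)
    (hN : N = (n + 3 * f) / 2 + 1)
    (W R S : Multiset ℝ) (h : ℕ)
    (hWcard : Multiset.card W = h) (hRcard : Multiset.card R = N)
    (hSR : S ≤ R) (hSW : S ≤ W) (hf : N - Multiset.card S ≤ f) :
    2 * f + 1 ≤ h ∧
    2 * f + 1 ≤ N - 2 * f ∧
    mnth W 1 ≤ mnth R (f + 1) ∧
    mnth W (N - 2 * f) ≤ mnth R (N - f) ∧
    mnth W (2 * f + 1) ≤ mnth W (N - 2 * f) ∧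
    mnth R (N - f) ≤ mnth W h ∧
    (mnth W 1 + mnth W (2 * f + 1)) / 2 ≤ (mnth R (f + 1) + mnth R (N - f)) / 2 := by
  have hSR_card := Multiset.card_le_card hSR
  have hSW_card := Multiset.card_le_card hSW
  set c := Multiset.card S
  have hN_ge : 4 * f + 1 ≤ N := by omega
  have low : mnth W 1 ≤ mnth R (f + 1) := calc
    mnth W 1 ≤ mnth S 1 := mnth_le_mnth_of_le hSW le_rfl (by omega)
    _ ≤ mnth R (1 + (N - c)) := hRcard ▸ mnth_le_mnth_add_card_sub_of_le hSR le_rfl (by omega)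
    _ ≤ mnth R (f + 1) := mnth_le_mnth (by omega) (by omega)
  have high : mnth W (N - 2 * f) ≤ mnth R (N - f) := calc
    mnth W (N - 2 * f) ≤ mnth S (N - 2 * f) := mnth_le_mnth_of_le hSW (by omega) (by omega)
    _ ≤ mnth R (N - 2 * f + (N - c)) :=
      hRcard ▸ mnth_le_mnth_add_card_sub_of_le hSR (by omega) (by omega)
    _ ≤ mnth R (N - f) := mnth_le_mnth (by omega) (by omega)
  have mid : mnth W (2 * f + 1) ≤ mnth W (N - 2 * f) := mnth_le_mnth (by omega) (by omega)
  have top : mnth R (N - f) ≤ mnth W h := calc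
    mnth R (N - f) ≤ mnth R c := mnth_le_mnth (by omega) (by omega)
    _ ≤ mnth S c := mnth_le_mnth_of_le hSR (by omega) le_rfl
    _ ≤ mnth W (c + (h - c)) := hWcard ▸ mnth_le_mnth_add_card_sub_of_le hSW (by omega) le_rfl
    _ = mnth W h := by congr 1; omega
  exact ⟨by omega, by omega, low, high, mid, top, by linarith⟩
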